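/- Let A be a finite-dimensional semisimple ℝ-algebra equipped with a star ring structure such that star is ℝ-linear (StarRing A, StarModule ℝ A), and let φ : A ⊗_ℝ A → A ⊗_ℝ A be the ℝ-linear map determined by φ(a ⊗ b) = (star b) ⊗ (star a). Then there exists a separability idempotent e ∈ A ⊗_ℝ A such that φ(e) = e and (σ ⊗ σ)(e) = e for every star-algebra automorphism σ of A (i.e., every ℝ-algebra automorphism with σ(star a) = star (σ a)). -/

import Mathlib

/-!
The idempotent is the Casimir element `e = ∑ bᵢ ⊗ bᵢ'` (dual bases) of the trace form
`(x, y) ↦ τ (x * y)`, `τ x = tr (y ↦ x * y)`. In characteristic zero this form is nondegenerate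
on a semisimple algebra: a left ideal on which it vanishes is generated by an idempotent of
trace, hence rank, zero. Under `V ⊗ V ≃ End V`, `p ⊗ q ↦ (w ↦ B p w • q)`, the element `e` is the
identity, so `(f ⊗ 1) e = (1 ⊗ g) e` for every `B`-adjoint pair `(f, g)`; hence `e` is fixed by
`σ ⊗ σ` for isometries `σ` and, `B` being symmetric, by the flip. Left and right multiplication
by `a` are adjoint, which is the separability relation, and taking traces gives `mul' e = 1` and
`tr (mulRight a) = τ a`. The latter makes `star` an isometry, and `φ` is the flip after
`star ⊗ star`.
-/

open scoped TensorProduct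

namespace LinearMap.BilinForm

open TensorProduct

variable {K V : Type*} [Field K] [AddCommGroup V] [Module K V] [FiniteDimensional K V]
  (B : LinearMap.BilinForm K V) (hB : B.Nondegenerate)

noncomputable def tensorEquivEnd : V ⊗[K] V ≃ₗ[K] Module.End K V :=
  (TensorProduct.congr (B.toDual hB) (LinearEquiv.refl K V)).trans (dualTensorHomEquiv K V V)

@[simp]
lemma tensorEquivEnd_tmul (p q w : V) : B.tensorEquivEnd hB (p ⊗ₜ q) w = B p w • q := by
  simp [tensorEquivEnd, dualTensorHomEquiv, toDual_def]

lemma trace_tensorEquivEnd (t : V ⊗[K] V) :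
    LinearMap.trace K V (B.tensorEquivEnd hB t) = lift B t := by
  induction t using TensorProduct.induction_on with
  | zero => simp
  | tmul p q =>
    rw [tensorEquivEnd, LinearEquiv.trans_apply, congr_tmul]
    simp [dualTensorHomEquiv, toDual_def]
  | add s t hs ht => simp [hs, ht]

lemma tensorEquivEnd_lTensor (f : Module.End K V) (t : V ⊗[K] V) :
    B.tensorEquivEnd hB (f.lTensor V t) = f ∘ₗ B.tensorEquivEnd hB t := by
  induction t using TensorProduct.induction_on with
  | zero => simp
  | tmul p q => ext w; simp
  | add s t hs ht => simp [hs, ht, LinearMap.comp_add]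

lemma tensorEquivEnd_rTensor {f g : Module.End K V} (hfg : IsAdjointPair B B f g)
    (t : V ⊗[K] V) :
    B.tensorEquivEnd hB (f.rTensor V t) = B.tensorEquivEnd hB t ∘ₗ g := by
  induction t using TensorProduct.induction_on with
  | zero => simp
  | tmul p q => ext w; simp [hfg p w]
  | add s t hs ht => simp [hs, ht, LinearMap.add_comp]

lemma apply_tensorEquivEnd_comm (hS : B.IsSymm) (t : V ⊗[K] V) (w v : V) :
    B (B.tensorEquivEnd hB t w) v = B w (B.tensorEquivEnd hB (TensorProduct.comm K V V t) v) := by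
  induction t using TensorProduct.induction_on with
  | zero => simp
  | tmul p q => simp [hS.eq w p, mul_comm]
  | add s t hs ht => simp [hs, ht]

noncomputable def casimir : V ⊗[K] V := (B.tensorEquivEnd hB).symm 1

@[simp]
lemma tensorEquivEnd_casimir : B.tensorEquivEnd hB (B.casimir hB) = 1 :=
  (B.tensorEquivEnd hB).apply_symm_apply 1

lemma rTensor_casimir_eq_lTensor {f g : Module.End K V} (hfg : IsAdjointPair B B f g) :
    f.rTensor V (B.casimir hB) = g.lTensor V (B.casimir hB) :=
  (B.tensorEquivEnd hB).injective <| by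
    rw [tensorEquivEnd_rTensor B hB hfg, tensorEquivEnd_lTensor, tensorEquivEnd_casimir]
    rfl

lemma map_casimir_of_isometry (σ : V ≃ₗ[K] V) (hσ : ∀ u v, B (σ u) (σ v) = B u v) :
    map σ.toLinearMap σ.toLinearMap (B.casimir hB) = B.casimir hB := by
  have hadj : IsAdjointPair B B σ σ.symm := fun u v => by rw [← hσ u, σ.apply_symm_apply]
  rw [← lTensor_comp_rTensor, LinearMap.comp_apply, rTensor_casimir_eq_lTensor B hB hadj,
    ← LinearMap.comp_apply, ← lTensor_comp]
  simp

lemma comm_casimir (hS : B.IsSymm) : TensorProduct.comm K V V (B.casimir hB) = B.casimir hB :=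
  (B.tensorEquivEnd hB).injective <| LinearMap.ext fun v => (B.toDual hB).injective <|
    LinearMap.ext fun w => by
      rw [toDual_def, toDual_def, hS.eq, ← apply_tensorEquivEnd_comm B hB hS,
        tensorEquivEnd_casimir]
      exact hS.eq w v

lemma trace_eq_lift_lTensor_casimir (f : Module.End K V) :
    LinearMap.trace K V f = lift B (f.lTensor V (B.casimir hB)) := by
  rw [← trace_tensorEquivEnd B hB, tensorEquivEnd_lTensor, tensorEquivEnd_casimir]
  rfl

end LinearMap.BilinForm

section TraceForm

variable (K : Type*) {A : Type*} [Field K] [Ring A] [Algebra K A]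

variable (A) in
noncomputable def mulLeftTrace : A →ₗ[K] K := LinearMap.trace K A ∘ₗ LinearMap.mul K A

variable (A) in
noncomputable def mulLeftTraceForm : LinearMap.BilinForm K A :=
  (LinearMap.mul K A).compr₂ (mulLeftTrace K A)

lemma mulLeftTrace_apply (a : A) :
    mulLeftTrace K A a = LinearMap.trace K A (LinearMap.mulLeft K a) := rfl

@[simp]
lemma mulLeftTraceForm_apply (a b : A) :
    mulLeftTraceForm K A a b = mulLeftTrace K A (a * b) := rfl

lemma mulLeftTrace_mul_comm (a b : A) : mulLeftTrace K A (a * b) = mulLeftTrace K A (b * a) := by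
  simp only [mulLeftTrace_apply, LinearMap.mulLeft_mul, ← Module.End.mul_eq_comp,
    LinearMap.trace_mul_comm]

lemma mulLeftTraceForm_isSymm : (mulLeftTraceForm K A).IsSymm :=
  ⟨fun a b => mulLeftTrace_mul_comm K a b⟩

lemma mulLeftTrace_algEquiv {A' : Type*} [Ring A'] [Algebra K A'] (σ : A ≃ₐ[K] A') (a : A) :
    mulLeftTrace K A' (σ a) = mulLeftTrace K A a := by
  have : LinearMap.mulLeft K (σ a) = σ.toLinearEquiv.conj (LinearMap.mulLeft K a) := by
    ext x
    simp [LinearEquiv.conj_apply]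
  rw [mulLeftTrace_apply, this, LinearMap.trace_conj', mulLeftTrace_apply]

variable [FiniteDimensional K A]

lemma eq_zero_of_isIdempotentElem_of_mulLeftTrace_eq_zero [CharZero K] {f : A}
    (hf : IsIdempotentElem f) (h : mulLeftTrace K A f = 0) : f = 0 := by
  have hL : IsIdempotentElem (LinearMap.mulLeft K f) := by
    rw [IsIdempotentElem, Module.End.mul_eq_comp, ← LinearMap.mulLeft_mul, hf.eq]
  simpa using LinearMap.congr_fun (LinearMap.IsIdempotentElem.eq_zero_of_trace_eq_zero hL h) 1

theorem mulLeftTraceForm_nondegenerate [CharZero K] [IsSemisimpleRing A] :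
    (mulLeftTraceForm K A).Nondegenerate := by
  refine (LinearMap.BilinForm.isSymm_iff.mp (mulLeftTraceForm_isSymm K)).isRefl
    |>.nondegenerate_iff_separatingLeft.mpr fun a ha => ?_
  obtain ⟨f, hf, hspan⟩ := IsSemisimpleRing.ideal_eq_span_idempotent (Ideal.span {a})
  obtain ⟨x, rfl⟩ := Ideal.mem_span_singleton'.mp (hspan ▸ Ideal.mem_span_singleton_self f)
  have : x * a = 0 :=
    eq_zero_of_isIdempotentElem_of_mulLeftTrace_eq_zero K hf <| by
      rw [mulLeftTrace_mul_comm]; exact ha x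
  simpa [this] using hspan

open TensorProduct LinearMap.BilinForm

lemma tmul_one_mul_casimir_mulLeftTraceForm (hA : (mulLeftTraceForm K A).Nondegenerate) (a : A) :
    (a ⊗ₜ[K] (1 : A)) * (mulLeftTraceForm K A).casimir hA =
      (mulLeftTraceForm K A).casimir hA * ((1 : A) ⊗ₜ[K] a) := by
  have hadj : LinearMap.IsAdjointPair (mulLeftTraceForm K A) (mulLeftTraceForm K A)
      (LinearMap.mulLeft K a) (LinearMap.mulRight K a) := fun u v => by
    simp only [mulLeftTraceForm_apply, LinearMap.mulLeft_apply, LinearMap.mulRight_apply,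
      mul_assoc]
    rw [mulLeftTrace_mul_comm, mul_assoc]
  rw [← LinearMap.mulLeft_apply (R := K), ← LinearMap.mulRight_apply (R := K),
    LinearMap.mulLeft_tmul, LinearMap.mulRight_tmul, LinearMap.mulLeft_one,
    LinearMap.mulRight_one]
  exact rTensor_casimir_eq_lTensor _ hA hadj

lemma mul'_casimir_mulLeftTraceForm (hA : (mulLeftTraceForm K A).Nondegenerate) :
    LinearMap.mul' K A ((mulLeftTraceForm K A).casimir hA) = 1 := by
  -- Since the Casimir element is symmetric, `tr (mulLeft x) = ∑ τ (pᵢ * x * qᵢ)` equals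
  -- `∑ τ (qᵢ * x * pᵢ) = τ (x * mul' e)`.
  have lift_lTensor_mulLeft_comm : ∀ (x : A) (t : A ⊗[K] A),
      lift (mulLeftTraceForm K A) ((LinearMap.mulLeft K x).lTensor A (TensorProduct.comm K A A t)) =
        mulLeftTrace K A (x * LinearMap.mul' K A t) := by
    intro x t
    induction t using TensorProduct.induction_on with
    | zero => simp
    | tmul p q => simpa [mul_assoc] using mulLeftTrace_mul_comm K q (x * p)
    | add s t hs ht => simp [hs, ht, mul_add]
  refine sub_eq_zero.mp (hA.2 _ fun x => ?_)
  rw [map_sub, mulLeftTraceForm_apply, mulLeftTraceForm_apply, ← lift_lTensor_mulLeft_comm,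
    comm_casimir _ hA (mulLeftTraceForm_isSymm K), ← trace_eq_lift_lTensor_casimir, mul_one,
    mulLeftTrace_apply, sub_self]

lemma trace_mulRight_eq_mulLeftTrace (hA : (mulLeftTraceForm K A).Nondegenerate) (a : A) :
    LinearMap.trace K A (LinearMap.mulRight K a) = mulLeftTrace K A a := by
  have lift_lTensor_mulRight : ∀ t : A ⊗[K] A,
      lift (mulLeftTraceForm K A) ((LinearMap.mulRight K a).lTensor A t) =
        mulLeftTrace K A (LinearMap.mul' K A t * a) := by
    intro t
    induction t using TensorProduct.induction_on with
    | zero => simp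
    | tmul p q => simp [mul_assoc]
    | add s t hs ht => simp [hs, ht, add_mul]
  rw [trace_eq_lift_lTensor_casimir _ hA, lift_lTensor_mulRight,
    mul'_casimir_mulLeftTraceForm K hA, one_mul]

end TraceForm

section Star

variable (K A : Type*) [CommSemiring K] [StarRing K] [TrivialStar K] [AddCommMonoid A]
  [StarAddMonoid A] [Module K A] [StarModule K A]

@[simps]
def starLinearEquivOfTrivialStar : A ≃ₗ[K] A where
  toFun := star
  invFun := star
  map_add' := star_add
  map_smul' r x := by simp [star_smul]
  left_inv := star_star
  right_inv := star_star

end Star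

section StarAlgebra

open TensorProduct LinearMap.BilinForm

variable (K : Type*) {A : Type*} [Field K] [StarRing K] [TrivialStar K] [Ring A] [StarRing A]
  [Algebra K A] [StarModule K A] [FiniteDimensional K A]

lemma mulLeftTrace_star (hA : (mulLeftTraceForm K A).Nondegenerate) (a : A) :
    mulLeftTrace K A (star a) = mulLeftTrace K A a := by
  have : LinearMap.mulLeft K (star a) =
      (starLinearEquivOfTrivialStar K A).conj (LinearMap.mulRight K a) := by
    ext x
    simp [LinearEquiv.conj_apply]
  rw [mulLeftTrace_apply, this, LinearMap.trace_conj', trace_mulRight_eq_mulLeftTrace K hA]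

lemma map_star_casimir_mulLeftTraceForm (hA : (mulLeftTraceForm K A).Nondegenerate) :
    map (starLinearEquivOfTrivialStar K A).toLinearMap
        (starLinearEquivOfTrivialStar K A).toLinearMap ((mulLeftTraceForm K A).casimir hA) =
      (mulLeftTraceForm K A).casimir hA :=
  map_casimir_of_isometry _ hA _ fun u v => by
    simp only [mulLeftTraceForm_apply, starLinearEquivOfTrivialStar_apply, ← star_mul,
      mulLeftTrace_star K hA, mulLeftTrace_mul_comm K v u]

end StarAlgebra

/-- A finite-dimensional semisimple real algebra with an `ℝ`-linear star
structure possesses a separability idempotent `e` with `φ e = e` (where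
`φ(a ⊗ b) = star b ⊗ star a`) which is invariant under all star-algebra
automorphisms. -/
theorem exists_star_invariant_separability_idempotent
    (A : Type*) [Ring A] [Algebra ℝ A] [FiniteDimensional ℝ A]
    [IsSemisimpleRing A] [StarRing A] [StarModule ℝ A]
    (φ : A ⊗[ℝ] A →ₗ[ℝ] A ⊗[ℝ] A)
    (hφ : ∀ a b : A, φ (a ⊗ₜ[ℝ] b) = star b ⊗ₜ[ℝ] star a) :
    ∃ e : A ⊗[ℝ] A,
      LinearMap.mul' ℝ A e = 1 ∧
      (∀ a : A, (a ⊗ₜ[ℝ] (1 : A)) * e = e * ((1 : A) ⊗ₜ[ℝ] a)) ∧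
      φ e = e ∧
      ∀ σ : A ≃ₐ[ℝ] A, (∀ a : A, σ (star a) = star (σ a)) →
        TensorProduct.map σ.toLinearMap σ.toLinearMap e = e := by
  have hA := mulLeftTraceForm_nondegenerate ℝ (A := A)
  have hφ_eq : φ = (TensorProduct.comm ℝ A A).toLinearMap ∘ₗ
      TensorProduct.map (starLinearEquivOfTrivialStar ℝ A).toLinearMap
        (starLinearEquivOfTrivialStar ℝ A).toLinearMap :=
    TensorProduct.ext' fun a b => by simp [hφ]
  refine ⟨(mulLeftTraceForm ℝ A).casimir hA, mul'_casimir_mulLeftTraceForm ℝ hA,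
    tmul_one_mul_casimir_mulLeftTraceForm ℝ hA, ?_, fun σ _ => ?_⟩
  · rw [hφ_eq, LinearMap.comp_apply, map_star_casimir_mulLeftTraceForm ℝ hA,
      LinearEquiv.coe_coe, LinearMap.BilinForm.comm_casimir _ hA (mulLeftTraceForm_isSymm ℝ)]
  · refine LinearMap.BilinForm.map_casimir_of_isometry _ hA σ.toLinearEquiv fun u v => ?_
    simp only [mulLeftTraceForm_apply, AlgEquiv.toLinearEquiv_apply, ← map_mul,
      mulLeftTrace_algEquiv]
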